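/- arXiv:math/9612225 — 2 statements merged into one kernel-verified Lean document; each statement's English description precedes it below -/
import Mathlib

section
/- Let a, b be complex numbers such that (a+b+1/2) + m ≠ 0 for every natural number m. Define, for each natural number k, S(k) = ∑_{j=0}^{k} [(a)_j (b)_j / ((a+b+1/2)_j · j!)] · [(a)_{k−j} (b)_{k−j} / ((a+b+1/2)_{k−j} · (k−j)!)]. Then for every natural number k, −(k+1)(2a+2b+k)(2a+2b+1+2k) · S(k+1) + 2 · (2b+k)(2a+k)(a+b+k) · S(k) = 0. -/
/-- Rising factorial (Pochhammer symbol) `(z)_n` over the complex numbers. -/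
noncomputable def poch (z : ℂ) (n : ℕ) : ℂ := (ascPochhammer ℂ n).eval z

lemma poch_zero (z : ℂ) : poch z 0 = 1 := by simp [poch]

lemma poch_succ (z : ℂ) (n : ℕ) : poch z (n + 1) = poch z n * (z + n) := by
  simp [poch, ascPochhammer_succ_eval]

lemma poch_ne (a b : ℂ) (h1 : ∀ m : ℕ, a + b + 1 / 2 + (m : ℂ) ≠ 0) (n : ℕ) :
    poch (a + b + 1 / 2) n ≠ 0 := by
  induction n with
  | zero => simp [poch_zero]
  | succ n ih => rw [poch_succ]; exact mul_ne_zero ih (h1 n)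

/-- The hypergeometric-squared coefficient term. -/
noncomputable def AA (a b : ℂ) (n : ℕ) : ℂ :=
  poch a n * poch b n / (poch (a + b + 1 / 2) n * (n.factorial : ℂ))

lemma AA_zero (a b : ℂ) : AA a b 0 = 1 := by simp [AA, poch_zero]

lemma AA_succ (a b : ℂ) (h1 : ∀ m : ℕ, a + b + 1 / 2 + (m : ℂ) ≠ 0) (n : ℕ) :
    AA a b (n + 1) * ((a + b + 1 / 2 + (n : ℂ)) * ((n : ℂ) + 1)) =
      AA a b n * ((a + (n : ℂ)) * (b + (n : ℂ))) := by
  have hpc := poch_ne a b h1 n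
  have hcn := h1 n
  have hf : ((n.factorial : ℂ)) ≠ 0 := by
    exact_mod_cast Nat.cast_ne_zero.mpr n.factorial_ne_zero
  have hn1 : (n : ℂ) + 1 ≠ 0 := Nat.cast_add_one_ne_zero n
  have hD1 : poch (a + b + 1 / 2) n * (a + b + 1 / 2 + (n : ℂ))
      * (((n : ℂ) + 1) * (n.factorial : ℂ)) ≠ 0 :=
    mul_ne_zero (mul_ne_zero hpc hcn) (mul_ne_zero hn1 hf)
  have hD2 : poch (a + b + 1 / 2) n * (n.factorial : ℂ) ≠ 0 := mul_ne_zero hpc hf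
  rw [AA, AA, poch_succ, poch_succ, poch_succ, Nat.factorial_succ]
  push_cast
  rw [div_mul_eq_mul_div, div_mul_eq_mul_div, div_eq_div_iff hD1 (by exact hD2)]
  ring

/-- The telescoping certificate function from Zeilberger's algorithm. -/
noncomputable def Gf (a b : ℂ) (k i : ℕ) : ℂ :=
  ((-4) * (i : ℂ) ^ 3 + 6 * ((k : ℂ) + 1) * (i : ℂ) ^ 2
      + (2 * a + 2 * b + 3 * (k : ℂ) + 2) * (2 * a + 2 * b - 1) * (i : ℂ))
    * AA a b i * AA a b (k + 1 - i)

lemma Gf_zero (a b : ℂ) (k : ℕ) : Gf a b k 0 = 0 := by simp [Gf]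

lemma Gf_top (a b : ℂ) (k : ℕ) :
    Gf a b k (k + 1) =
      (((k : ℂ) + 1) * (2 * a + 2 * b + (k : ℂ)) * (2 * a + 2 * b + 1 + 2 * (k : ℂ)))
        * AA a b (k + 1) := by
  rw [Gf, Nat.sub_self, AA_zero]
  push_cast
  ring

set_option maxHeartbeats 2000000 in
lemma key (a b : ℂ) (h1 : ∀ m : ℕ, a + b + 1 / 2 + (m : ℂ) ≠ 0) (k j : ℕ) (hj : j ≤ k) :
    -(((k : ℂ) + 1) * (2 * a + 2 * b + (k : ℂ)) * (2 * a + 2 * b + 1 + 2 * (k : ℂ)))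
        * (AA a b j * AA a b (k + 1 - j))
      + 2 * ((2 * b + (k : ℂ)) * (2 * a + (k : ℂ)) * (a + b + (k : ℂ)))
        * (AA a b j * AA a b (k - j))
      = Gf a b k (j + 1) - Gf a b k j := by
  obtain ⟨m, rfl⟩ : ∃ m, k = j + m := ⟨k - j, by omega⟩
  have e1 : j + m + 1 - j = m + 1 := by omega
  have e2 : j + m + 1 - (j + 1) = m := by omega
  have e3 : j + m - j = m := by omega
  rw [Gf, Gf, e1, e2, e3]
  have relm := AA_succ a b h1 m
  have relj := AA_succ a b h1 j
  have hcm := h1 m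
  have hcj := h1 j
  have hm1 : (m : ℂ) + 1 ≠ 0 := Nat.cast_add_one_ne_zero m
  have hj1 : (j : ℂ) + 1 ≠ 0 := Nat.cast_add_one_ne_zero j
  have hD : ((a + b + 1 / 2 + (j : ℂ)) * ((j : ℂ) + 1))
      * ((a + b + 1 / 2 + (m : ℂ)) * ((m : ℂ) + 1)) ≠ 0 :=
    mul_ne_zero (mul_ne_zero hcj hj1) (mul_ne_zero hcm hm1)
  apply mul_right_cancel₀ hD
  push_cast
  linear_combination
    (((-((((j:ℂ)+(m:ℂ)) + 1) * (2*a+2*b+((j:ℂ)+(m:ℂ))) * (2*a+2*b+1+2*((j:ℂ)+(m:ℂ)))))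
        + ((-4)*(j:ℂ)^3 + 6*(((j:ℂ)+(m:ℂ))+1)*(j:ℂ)^2
          + (2*a+2*b+3*((j:ℂ)+(m:ℂ))+2)*(2*a+2*b-1)*(j:ℂ)))
      * AA a b j * ((a + b + 1/2 + (j:ℂ)) * ((j:ℂ) + 1))) * relm
    - (((-4)*((j:ℂ)+1)^3 + 6*(((j:ℂ)+(m:ℂ))+1)*((j:ℂ)+1)^2
          + (2*a+2*b+3*((j:ℂ)+(m:ℂ))+2)*(2*a+2*b-1)*((j:ℂ)+1))
        * AA a b m * ((a + b + 1/2 + (m:ℂ)) * ((m:ℂ) + 1))) * relj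

theorem stmt_4 (a b : ℂ)
    (h1 : ∀ m : ℕ, a + b + 1 / 2 + (m : ℂ) ≠ 0)
    (S : ℕ → ℂ)
    (hS : ∀ k : ℕ, S k = ∑ j ∈ Finset.range (k + 1),
      (poch a j * poch b j / (poch (a + b + 1 / 2) j * (j.factorial : ℂ))) *
        (poch a (k - j) * poch b (k - j) /
          (poch (a + b + 1 / 2) (k - j) * ((k - j).factorial : ℂ)))) :
    ∀ k : ℕ, -(((k : ℂ) + 1) * (2 * a + 2 * b + (k : ℂ)) * (2 * a + 2 * b + 1 + 2 * (k : ℂ)))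
        * S (k + 1)
      + 2 * ((2 * b + (k : ℂ)) * (2 * a + (k : ℂ)) * (a + b + (k : ℂ))) * S k = 0 := by
  intro k
  simp only [hS]
  show -(((k : ℂ) + 1) * (2 * a + 2 * b + (k : ℂ)) * (2 * a + 2 * b + 1 + 2 * (k : ℂ)))
        * (∑ j ∈ Finset.range (k + 1 + 1), AA a b j * AA a b (k + 1 - j))
      + 2 * ((2 * b + (k : ℂ)) * (2 * a + (k : ℂ)) * (a + b + (k : ℂ)))
        * (∑ j ∈ Finset.range (k + 1), AA a b j * AA a b (k - j)) = 0
  rw [Finset.sum_range_succ, Nat.sub_self, AA_zero, mul_one]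
  have tele := Finset.sum_range_sub (Gf a b k) (k + 1)
  have hsum : ∑ j ∈ Finset.range (k + 1),
      (-(((k : ℂ) + 1) * (2 * a + 2 * b + (k : ℂ)) * (2 * a + 2 * b + 1 + 2 * (k : ℂ)))
          * (AA a b j * AA a b (k + 1 - j))
        + 2 * ((2 * b + (k : ℂ)) * (2 * a + (k : ℂ)) * (a + b + (k : ℂ)))
          * (AA a b j * AA a b (k - j)))
      = Gf a b k (k + 1) - Gf a b k 0 := by
    rw [← tele]
    exact Finset.sum_congr rfl fun j hj =>
      key a b h1 k j (Nat.lt_succ_iff.mp (Finset.mem_range.mp hj))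
  rw [Finset.sum_add_distrib, ← Finset.mul_sum, ← Finset.mul_sum, Gf_top, Gf_zero] at hsum
  linear_combination hsum
end

section
/- Let a, b be complex numbers such that b + m ≠ 0 for every natural number m, and let x be a complex number. Then for every natural number k, ∑_{j=0}^{k} [(a)_j x^j / ((b)_j · j!)] · [(−x)^{k−j} / (k−j)!] = (b−a)_k (−x)^k / ((b)_k · k!). (This is Kummer's identity e^{−x} · ₁F₁(a; b; x) = ₁F₁(b−a; b; −x) stated at the level of power-series coefficients via the Cauchy product.) -/
open Polynomial Finset Nat

section CommRing

variable {R : Type*} [CommRing R]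

theorem descPochhammer_smeval_eq_eval_ascPochhammer (r : R) (n : ℕ) :
    (descPochhammer ℤ n).smeval r = (ascPochhammer R n).eval (r - n + 1) := by
  rw [descPochhammer_smeval_eq_ascPochhammer, ascPochhammer_smeval_eq_eval]

theorem descPochhammer_smeval_neg (r : R) (n : ℕ) :
    (descPochhammer ℤ n).smeval (-r) = (-1) ^ n * (ascPochhammer R n).eval r := by
  rw [descPochhammer_smeval_eq_eval_ascPochhammer, show -r - n + 1 = -(r + n - 1) by ring,
    ascPochhammer_eval_neg_eq_descPochhammer, descPochhammer_eval_eq_ascPochhammer,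
    show r + n - 1 - n + 1 = r by ring]

theorem ascPochhammer_eval_sub_eq_sum (a b : R) (k : ℕ) :
    (ascPochhammer R k).eval (b - a) = ∑ ij ∈ antidiagonal k,
      (k.choose ij.1 : R) * ((-1) ^ ij.1 * (ascPochhammer R ij.1).eval a *
        (ascPochhammer R ij.2).eval (b + ij.1)) := by
  rw [show b - a = -a + (b + k - 1) - k + 1 by ring, ← descPochhammer_smeval_eq_eval_ascPochhammer,
    Ring.descPochhammer_smeval_add k (Commute.all _ _)]
  refine sum_congr rfl fun ⟨i, j⟩ hij => ?_
  obtain rfl : i + j = k := HasAntidiagonal.mem_antidiagonal.mp hij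
  rw [descPochhammer_smeval_neg, descPochhammer_smeval_eq_eval_ascPochhammer,
    show b + ((i + j : ℕ) : R) - 1 - j + 1 = b + i by push_cast; ring]

end CommRing

theorem poch_add (z : ℂ) (m n : ℕ) : poch z (m + n) = poch z m * poch (z + m) n := by
  simpa [poch, eval_comp] using congrArg (eval z) (ascPochhammer_mul ℂ m n).symm

theorem poch_ne_zero {z : ℂ} (hz : ∀ m : ℕ, z + m ≠ 0) (n : ℕ) : poch z n ≠ 0 := by
  rw [poch, Ne, ascPochhammer_eval_eq_zero_iff]
  rintro ⟨m, -, hm⟩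
  exact hz m (by rw [hm, add_neg_cancel])

theorem poch_sub_eq_sum (a b : ℂ) (k : ℕ) :
    poch (b - a) k = ∑ ij ∈ antidiagonal k,
      (k.choose ij.1 : ℂ) * ((-1) ^ ij.1 * poch a ij.1 * poch (b + ij.1) ij.2) :=
  ascPochhammer_eval_sub_eq_sum a b k

theorem kummer_coeff_term {a b : ℂ} (x : ℂ) (hb : ∀ m : ℕ, b + m ≠ 0) (i j : ℕ) :
    poch a i * x ^ i / (poch b i * i !) * ((-x) ^ j / j !) =
      (i + j).choose i * ((-1) ^ i * poch a i * poch (b + i) j) *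
        ((-x) ^ (i + j) / (poch b (i + j) * (i + j)!)) := by
  have hbi : ∀ m : ℕ, b + i + m ≠ 0 := fun m => by simpa [add_assoc] using hb (i + m)
  have hfact : ((i + j).choose i * i ! * j ! : ℂ) = (i + j)! := by
    rw [Nat.choose_symm_add]; exact_mod_cast Nat.add_choose_mul_factorial_mul_factorial i j
  have hsq : ((-1 : ℂ) ^ i) ^ 2 = 1 := by rw [← pow_mul, pow_mul', neg_one_sq, one_pow]
  have := poch_ne_zero hb i
  have := poch_ne_zero hbi j
  have : ((i + j).choose i : ℂ) ≠ 0 := by exact_mod_cast (Nat.choose_pos (Nat.le_add_right i j)).ne'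
  rw [poch_add, ← hfact, pow_add, neg_pow x i]
  field_simp
  rw [hsq]
  ring

/-- Kummer's identity at the level of power-series coefficients. -/
theorem stmt_5 (a b x : ℂ) (hb : ∀ m : ℕ, b + (m : ℂ) ≠ 0) (k : ℕ) :
    ∑ j ∈ Finset.range (k + 1),
      (poch a j * x ^ j / (poch b j * (j.factorial : ℂ))) *
        ((-x) ^ (k - j) / ((k - j).factorial : ℂ))
      = poch (b - a) k * (-x) ^ k / (poch b k * (k.factorial : ℂ)) := by
  rw [← Nat.sum_antidiagonal_eq_sum_range_succ
      (fun i j => poch a i * x ^ i / (poch b i * i !) * ((-x) ^ j / j !)),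
    mul_div_assoc, poch_sub_eq_sum, sum_mul]
  refine sum_congr rfl fun ⟨i, j⟩ hij => ?_
  obtain rfl : i + j = k := HasAntidiagonal.mem_antidiagonal.mp hij
  exact kummer_coeff_term x hb i j
end
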